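/- arXiv:1803.03637 — 4 statements merged into one kernel-verified Lean document; each statement's English description precedes it below -/
import Mathlib

section
/- Let A_I be the arrangement in ℝⁿ (n ≥ 4) consisting of the hyperplanes ker(x_i − x_j) for 1 ≤ i < j ≤ n, ker(x_i + x_j) for 2 ≤ i < j ≤ n, and ker(x₁ + x_n). Let Y = ⋂_{2 ≤ i < j ≤ n−1} ker(x_i − x_j). Then Y has dimension 3, and the restricted arrangement A_I^Y = {Y ∩ H : H ∈ A_I, Y ⊄ H} consists of exactly 6 hyperplanes of Y, cut out on Y (with coordinates x₁, x₂, x_n) by the linear forms x₁ − x₂, x₂, x₁ − x_n, x₁ + x_n, x₂ − x_n, x₂ + x_n. -/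
/-- Auxiliary vector: value `a` at index `0`, `c` at index `n-1`, `b` elsewhere. -/
def stmt6vec (n : ℕ) (a b c : ℝ) : Fin n → ℝ :=
  fun k => if (k : ℕ) = 0 then a else if (k : ℕ) = n - 1 then c else b

/-- For the arrangement `A_I` in `ℝⁿ` (`n ≥ 4`) with hyperplanes
`ker(x_i−x_j)` (`1 ≤ i < j ≤ n`), `ker(x_i+x_j)` (`2 ≤ i < j ≤ n`) and `ker(x₁+x_n)`
(1-based), and `Y = ⋂_{2 ≤ i < j ≤ n−1} ker(x_i−x_j)`, the subspace `Y` has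
dimension 3 and the restriction `A_I^Y` consists of exactly the 6 hyperplanes of
`Y` cut out by `x₁−x₂, x₂, x₁−x_n, x₁+x_n, x₂−x_n, x₂+x_n`. -/
theorem stmt_6 (n : ℕ) (hn : 4 ≤ n) :
    let i0 : Fin n := ⟨0, by omega⟩
    let i1 : Fin n := ⟨1, by omega⟩
    let iN : Fin n := ⟨n - 1, by omega⟩
    let A : Set (Set (Fin n → ℝ)) :=
      {H | ∃ i j : Fin n, i < j ∧ H = {v | v i - v j = 0}} ∪
        {H | ∃ i j : Fin n, 1 ≤ (i : ℕ) ∧ i < j ∧ H = {v | v i + v j = 0}} ∪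
        {{v | v i0 + v iN = 0}}
    let Y : Set (Fin n → ℝ) :=
      {v | ∀ i j : Fin n, 1 ≤ (i : ℕ) → i < j → (j : ℕ) ≤ n - 2 → v i - v j = 0}
    let R : Set (Set (Fin n → ℝ)) :=
      { Y ∩ {v | v i0 - v i1 = 0}, Y ∩ {v | v i1 = 0},
        Y ∩ {v | v i0 - v iN = 0}, Y ∩ {v | v i0 + v iN = 0},
        Y ∩ {v | v i1 - v iN = 0}, Y ∩ {v | v i1 + v iN = 0} }
    (∃ W : Submodule ℝ (Fin n → ℝ), (W : Set (Fin n → ℝ)) = Y ∧ Module.finrank ℝ W = 3) ∧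
      {T | ∃ H ∈ A, ¬ Y ⊆ H ∧ T = Y ∩ H} = R ∧ R.ncard = 6 := by
  intro i0 i1 iN A Y R
  have h0 : (i0 : ℕ) = 0 := rfl
  have h1 : (i1 : ℕ) = 1 := rfl
  have hNv : (iN : ℕ) = n - 1 := rfl
  -- the sample vectors lie in Y
  have hvec : ∀ a b c : ℝ, stmt6vec n a b c ∈ Y := by
    intro a b c i j hi hij hj
    have hij' : (i : ℕ) < (j : ℕ) := hij
    have hvi : stmt6vec n a b c i = b := by
      simp only [stmt6vec]
      rw [if_neg (by omega), if_neg (by omega)]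
    have hvj : stmt6vec n a b c j = b := by
      simp only [stmt6vec]
      rw [if_neg (by omega), if_neg (by omega)]
    rw [hvi, hvj, sub_self]
  have hvec0 : ∀ a b c : ℝ, stmt6vec n a b c i0 = a := by
    intro a b c; simp [stmt6vec, h0]
  have hvec1 : ∀ a b c : ℝ, stmt6vec n a b c i1 = b := by
    intro a b c; simp only [stmt6vec, h1]
    rw [if_neg (by omega), if_neg (by omega)]
  have hvecN : ∀ a b c : ℝ, stmt6vec n a b c iN = c := by
    intro a b c; simp only [stmt6vec, hNv]
    rw [if_neg (by omega)]; simp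
  -- on Y, all middle coordinates equal the coordinate at i1
  have hYmid : ∀ v ∈ Y, ∀ k : Fin n, 1 ≤ (k : ℕ) → (k : ℕ) ≤ n - 2 → v k = v i1 := by
    intro v hv k hk1 hk2
    rcases Nat.eq_or_lt_of_le hk1 with h | h
    · have : k = i1 := Fin.ext (by omega)
      rw [this]
    · have := hv i1 k (by omega) (by exact h) hk2
      linarith
  -- congruence for intersections with Y
  have hcong : ∀ S T' : Set (Fin n → ℝ), (∀ v ∈ Y, (v ∈ S ↔ v ∈ T')) →
      Y ∩ S = Y ∩ T' := by
    intro S T' h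
    ext v
    simp only [Set.mem_inter_iff]
    exact and_congr_right fun hv => h v hv
  -- any submodule with underlying set Y has rank 3
  have hrank : ∀ W : Submodule ℝ (Fin n → ℝ), (W : Set (Fin n → ℝ)) = Y →
      Module.finrank ℝ W = 3 := by
    intro W hWY
    have hmem : ∀ v : Fin n → ℝ, v ∈ W ↔ v ∈ Y := fun v => by
      rw [← hWY]; rfl
    let L : (Fin n → ℝ) →ₗ[ℝ] (Fin 3 → ℝ) :=
      LinearMap.pi (fun t : Fin 3 => LinearMap.proj (![i0, i1, iN] t))
    have hL : ∀ (v : Fin n → ℝ) (t : Fin 3), L v t = v (![i0, i1, iN] t) := by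
      intro v t; rfl
    have hbij : Function.Bijective (L.comp W.subtype) := by
      constructor
      · intro x y h
        have e0 : x.1 i0 = y.1 i0 := by
          have := congrFun h 0; simpa [hL] using this
        have e1 : x.1 i1 = y.1 i1 := by
          have := congrFun h 1; simpa [hL] using this
        have eN : x.1 iN = y.1 iN := by
          have := congrFun h 2; simpa [hL] using this
        have hx := (hmem _).mp x.2
        have hy := (hmem _).mp y.2
        apply Subtype.ext
        funext k
        by_cases hk0 : (k : ℕ) = 0
        · have : k = i0 := Fin.ext (by omega)
          rw [this]; exact e0
        · by_cases hkN : (k : ℕ) = n - 1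
          · have : k = iN := Fin.ext (by omega)
            rw [this]; exact eN
          · have hk1 : 1 ≤ (k : ℕ) := by omega
            have hk2 : (k : ℕ) ≤ n - 2 := by have := k.isLt; omega
            rw [hYmid x.1 hx k hk1 hk2, hYmid y.1 hy k hk1 hk2, e1]
      · intro w
        refine ⟨⟨stmt6vec n (w 0) (w 1) (w 2), (hmem _).mpr (hvec _ _ _)⟩, ?_⟩
        funext t
        fin_cases t
        · simpa [hL] using hvec0 (w 0) (w 1) (w 2)
        · simpa [hL] using hvec1 (w 0) (w 1) (w 2)
        · simpa [hL] using hvecN (w 0) (w 1) (w 2)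
    have e := LinearEquiv.ofBijective (L.comp W.subtype) hbij
    rw [e.finrank_eq, Module.finrank_fin_fun]
  refine ⟨?_, ?_, ?_⟩
  · -- dimension 3
    refine ⟨{ carrier := Y
              add_mem' := ?_
              zero_mem' := ?_
              smul_mem' := ?_ }, rfl, hrank _ rfl⟩
    · intro v w hv hw i j hi hij hj
      have h1' := hv i j hi hij hj
      have h2' := hw i j hi hij hj
      simp only [Pi.add_apply]
      linarith
    · intro i j hi hij hj
      simp
    · intro c v hv i j hi hij hj
      have h1' := hv i j hi hij hj
      have hv' : v i = v j := by linarith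
      simp only [Pi.smul_apply, smul_eq_mul, hv']
      ring
  · -- set equality
    ext T
    simp only [Set.mem_setOf_eq]
    constructor
    · rintro ⟨H, hH, hns, rfl⟩
      simp only [A, Set.mem_union, Set.mem_setOf_eq, Set.mem_singleton_iff] at hH
      simp only [R, Set.mem_insert_iff, Set.mem_singleton_iff]
      rcases hH with (⟨i, j, hij, rfl⟩ | ⟨i, j, hi1, hij, rfl⟩) | rfl
      · -- difference hyperplane
        have hij' : (i : ℕ) < (j : ℕ) := hij
        have hjn : (j : ℕ) < n := j.isLt
        by_cases hi0 : (i : ℕ) = 0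
        · have hii : i = i0 := Fin.ext (by omega)
          by_cases hjN : (j : ℕ) = n - 1
          · have hjj : j = iN := Fin.ext (by omega)
            rw [hii, hjj]
            tauto
          · have hj1 : 1 ≤ (j : ℕ) := by omega
            have hj2 : (j : ℕ) ≤ n - 2 := by omega
            have heq : Y ∩ {v | v i - v j = 0} = Y ∩ {v | v i0 - v i1 = 0} := by
              apply hcong; intro v hv
              simp only [Set.mem_setOf_eq, hYmid v hv j hj1 hj2, hii]
            rw [heq]; tauto
        · have hi1 : 1 ≤ (i : ℕ) := by omega
          by_cases hjN : (j : ℕ) = n - 1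
          · have hjj : j = iN := Fin.ext (by omega)
            have hi2 : (i : ℕ) ≤ n - 2 := by omega
            have heq : Y ∩ {v | v i - v j = 0} = Y ∩ {v | v i1 - v iN = 0} := by
              apply hcong; intro v hv
              simp only [Set.mem_setOf_eq, hYmid v hv i hi1 hi2, hjj]
            rw [heq]; tauto
          · have hj2 : (j : ℕ) ≤ n - 2 := by omega
            exact absurd (fun v hv => hv i j hi1 hij hj2) hns
      · -- sum hyperplane
        have hij' : (i : ℕ) < (j : ℕ) := hij
        have hjn : (j : ℕ) < n := j.isLt
        have hi2 : (i : ℕ) ≤ n - 2 := by omega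
        by_cases hjN : (j : ℕ) = n - 1
        · have hjj : j = iN := Fin.ext (by omega)
          have heq : Y ∩ {v | v i + v j = 0} = Y ∩ {v | v i1 + v iN = 0} := by
            apply hcong; intro v hv
            simp only [Set.mem_setOf_eq, hYmid v hv i hi1 hi2, hjj]
          rw [heq]; tauto
        · have hj1 : 1 ≤ (j : ℕ) := by omega
          have hj2 : (j : ℕ) ≤ n - 2 := by omega
          have heq : Y ∩ {v | v i + v j = 0} = Y ∩ {v | v i1 = 0} := by
            apply hcong; intro v hv
            simp only [Set.mem_setOf_eq, hYmid v hv i hi1 hi2, hYmid v hv j hj1 hj2]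
            constructor <;> intro h <;> linarith
          rw [heq]; tauto
      · -- the extra hyperplane
        tauto
    · intro hT
      simp only [R, Set.mem_insert_iff, Set.mem_singleton_iff] at hT
      have hltONE : i0 < i1 := by rw [Fin.lt_def, h0, h1]; omega
      have hltON : i0 < iN := by rw [Fin.lt_def, h0, hNv]; omega
      have hlt1N : i1 < iN := by rw [Fin.lt_def, h1, hNv]; omega
      have memA : ∀ H, H ∈ ({H | ∃ i j : Fin n, i < j ∧ H = {v | v i - v j = 0}} ∪
          {H | ∃ i j : Fin n, 1 ≤ (i : ℕ) ∧ i < j ∧ H = {v | v i + v j = 0}} ∪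
          {{v | v i0 + v iN = 0}} : Set (Set (Fin n → ℝ))) → H ∈ A := fun H h => h
      rcases hT with rfl | rfl | rfl | rfl | rfl | rfl
      · refine ⟨{v | v i0 - v i1 = 0}, memA _ (Or.inl (Or.inl ⟨i0, i1, hltONE, rfl⟩)), ?_, rfl⟩
        intro hsub
        have h := hsub (hvec 1 0 0)
        simp only [Set.mem_setOf_eq, hvec0, hvec1] at h
        norm_num at h
      · -- Y ∩ {v i1 = 0} comes from the hyperplane v i1 + v i2 = 0
        set i2 : Fin n := ⟨2, by omega⟩ with hi2def
        have hi2v : (i2 : ℕ) = 2 := rfl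
        have hlt12 : i1 < i2 := by rw [Fin.lt_def, h1, hi2v]; omega
        refine ⟨{v | v i1 + v i2 = 0},
          memA _ (Or.inl (Or.inr ⟨i1, i2, by rw [h1], hlt12, rfl⟩)), ?_, ?_⟩
        · intro hsub
          have h := hsub (hvec 0 1 0)
          have hvi2 : stmt6vec n 0 1 0 i2 = 1 := by
            simp only [stmt6vec, hi2v]
            rw [if_neg (by omega), if_neg (by omega)]
          simp only [Set.mem_setOf_eq, hvec1, hvi2] at h
          norm_num at h
        · apply hcong; intro v hv
          have := hYmid v hv i2 (by omega) (by omega)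
          simp only [Set.mem_setOf_eq, this]
          constructor <;> intro h <;> linarith
      · refine ⟨{v | v i0 - v iN = 0}, memA _ (Or.inl (Or.inl ⟨i0, iN, hltON, rfl⟩)), ?_, rfl⟩
        intro hsub
        have h := hsub (hvec 1 0 0)
        simp only [Set.mem_setOf_eq, hvec0, hvecN] at h
        norm_num at h
      · refine ⟨{v | v i0 + v iN = 0}, memA _ (Or.inr rfl), ?_, rfl⟩
        intro hsub
        have h := hsub (hvec 1 0 0)
        simp only [Set.mem_setOf_eq, hvec0, hvecN] at h
        norm_num at h
      · refine ⟨{v | v i1 - v iN = 0}, memA _ (Or.inl (Or.inl ⟨i1, iN, hlt1N, rfl⟩)), ?_, rfl⟩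
        intro hsub
        have h := hsub (hvec 0 1 0)
        simp only [Set.mem_setOf_eq, hvec1, hvecN] at h
        norm_num at h
      · refine ⟨{v | v i1 + v iN = 0},
          memA _ (Or.inl (Or.inr ⟨i1, iN, by rw [h1], hlt1N, rfl⟩)), ?_, rfl⟩
        intro hsub
        have h := hsub (hvec 0 1 1)
        simp only [Set.mem_setOf_eq, hvec1, hvecN] at h
        norm_num at h
  · -- cardinality
    have hne : ∀ (p : Fin n → ℝ) (S T' : Set (Fin n → ℝ)), p ∈ S → p ∉ T' → S ≠ T' :=
      fun p S T' hS hT h => hT (h ▸ hS)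
    -- membership and non-membership facts for test points
    have memd : ∀ a b c x y : ℝ, x - y = 0 →
        stmt6vec n a b c ∈ Y → stmt6vec n a b c ∈ Y ∩ {v | x - y = 0} := by
      intro a b c x y h hY; exact ⟨hY, h⟩
    have m1 : stmt6vec n 1 1 2 ∈ Y ∩ {v | v i0 - v i1 = 0} :=
      ⟨hvec _ _ _, by simp only [Set.mem_setOf_eq, hvec0, hvec1]; norm_num⟩
    have m2 : stmt6vec n 1 0 2 ∈ Y ∩ {v | v i1 = 0} :=
      ⟨hvec _ _ _, by simp only [Set.mem_setOf_eq, hvec1]⟩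
    have m3 : stmt6vec n 1 2 1 ∈ Y ∩ {v | v i0 - v iN = 0} :=
      ⟨hvec _ _ _, by simp only [Set.mem_setOf_eq, hvec0, hvecN]; norm_num⟩
    have m4 : stmt6vec n 1 2 (-1) ∈ Y ∩ {v | v i0 + v iN = 0} :=
      ⟨hvec _ _ _, by simp only [Set.mem_setOf_eq, hvec0, hvecN]; norm_num⟩
    have m5 : stmt6vec n 1 2 2 ∈ Y ∩ {v | v i1 - v iN = 0} :=
      ⟨hvec _ _ _, by simp only [Set.mem_setOf_eq, hvec1, hvecN]; norm_num⟩
    have n12 : stmt6vec n 1 1 2 ∉ Y ∩ {v | v i1 = 0} := by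
      rintro ⟨-, h⟩; simp only [Set.mem_setOf_eq, hvec1] at h; norm_num at h
    have n13 : stmt6vec n 1 1 2 ∉ Y ∩ {v | v i0 - v iN = 0} := by
      rintro ⟨-, h⟩; simp only [Set.mem_setOf_eq, hvec0, hvecN] at h; norm_num at h
    have n14 : stmt6vec n 1 1 2 ∉ Y ∩ {v | v i0 + v iN = 0} := by
      rintro ⟨-, h⟩; simp only [Set.mem_setOf_eq, hvec0, hvecN] at h; norm_num at h
    have n15 : stmt6vec n 1 1 2 ∉ Y ∩ {v | v i1 - v iN = 0} := by
      rintro ⟨-, h⟩; simp only [Set.mem_setOf_eq, hvec1, hvecN] at h; norm_num at h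
    have n16 : stmt6vec n 1 1 2 ∉ Y ∩ {v | v i1 + v iN = 0} := by
      rintro ⟨-, h⟩; simp only [Set.mem_setOf_eq, hvec1, hvecN] at h; norm_num at h
    have n23 : stmt6vec n 1 0 2 ∉ Y ∩ {v | v i0 - v iN = 0} := by
      rintro ⟨-, h⟩; simp only [Set.mem_setOf_eq, hvec0, hvecN] at h; norm_num at h
    have n24 : stmt6vec n 1 0 2 ∉ Y ∩ {v | v i0 + v iN = 0} := by
      rintro ⟨-, h⟩; simp only [Set.mem_setOf_eq, hvec0, hvecN] at h; norm_num at h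
    have n25 : stmt6vec n 1 0 2 ∉ Y ∩ {v | v i1 - v iN = 0} := by
      rintro ⟨-, h⟩; simp only [Set.mem_setOf_eq, hvec1, hvecN] at h; norm_num at h
    have n26 : stmt6vec n 1 0 2 ∉ Y ∩ {v | v i1 + v iN = 0} := by
      rintro ⟨-, h⟩; simp only [Set.mem_setOf_eq, hvec1, hvecN] at h; norm_num at h
    have n34 : stmt6vec n 1 2 1 ∉ Y ∩ {v | v i0 + v iN = 0} := by
      rintro ⟨-, h⟩; simp only [Set.mem_setOf_eq, hvec0, hvecN] at h; norm_num at h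
    have n35 : stmt6vec n 1 2 1 ∉ Y ∩ {v | v i1 - v iN = 0} := by
      rintro ⟨-, h⟩; simp only [Set.mem_setOf_eq, hvec1, hvecN] at h; norm_num at h
    have n36 : stmt6vec n 1 2 1 ∉ Y ∩ {v | v i1 + v iN = 0} := by
      rintro ⟨-, h⟩; simp only [Set.mem_setOf_eq, hvec1, hvecN] at h; norm_num at h
    have n45 : stmt6vec n 1 2 (-1) ∉ Y ∩ {v | v i1 - v iN = 0} := by
      rintro ⟨-, h⟩; simp only [Set.mem_setOf_eq, hvec1, hvecN] at h; norm_num at h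
    have n46 : stmt6vec n 1 2 (-1) ∉ Y ∩ {v | v i1 + v iN = 0} := by
      rintro ⟨-, h⟩; simp only [Set.mem_setOf_eq, hvec1, hvecN] at h; norm_num at h
    have n56 : stmt6vec n 1 2 2 ∉ Y ∩ {v | v i1 + v iN = 0} := by
      rintro ⟨-, h⟩; simp only [Set.mem_setOf_eq, hvec1, hvecN] at h; norm_num at h
    have ha1 : (Y ∩ {v | v i0 - v i1 = 0}) ∉
        ({Y ∩ {v | v i1 = 0}, Y ∩ {v | v i0 - v iN = 0}, Y ∩ {v | v i0 + v iN = 0},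
          Y ∩ {v | v i1 - v iN = 0}, Y ∩ {v | v i1 + v iN = 0}} : Set (Set (Fin n → ℝ))) := by
      simp only [Set.mem_insert_iff, Set.mem_singleton_iff]
      push_neg
      exact ⟨hne _ _ _ m1 n12, hne _ _ _ m1 n13, hne _ _ _ m1 n14,
        hne _ _ _ m1 n15, hne _ _ _ m1 n16⟩
    have ha2 : (Y ∩ {v | v i1 = 0}) ∉
        ({Y ∩ {v | v i0 - v iN = 0}, Y ∩ {v | v i0 + v iN = 0},
          Y ∩ {v | v i1 - v iN = 0}, Y ∩ {v | v i1 + v iN = 0}} : Set (Set (Fin n → ℝ))) := by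
      simp only [Set.mem_insert_iff, Set.mem_singleton_iff]
      push_neg
      exact ⟨hne _ _ _ m2 n23, hne _ _ _ m2 n24, hne _ _ _ m2 n25, hne _ _ _ m2 n26⟩
    have ha3 : (Y ∩ {v | v i0 - v iN = 0}) ∉
        ({Y ∩ {v | v i0 + v iN = 0}, Y ∩ {v | v i1 - v iN = 0},
          Y ∩ {v | v i1 + v iN = 0}} : Set (Set (Fin n → ℝ))) := by
      simp only [Set.mem_insert_iff, Set.mem_singleton_iff]
      push_neg
      exact ⟨hne _ _ _ m3 n34, hne _ _ _ m3 n35, hne _ _ _ m3 n36⟩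
    have ha4 : (Y ∩ {v | v i0 + v iN = 0}) ∉
        ({Y ∩ {v | v i1 - v iN = 0}, Y ∩ {v | v i1 + v iN = 0}} : Set (Set (Fin n → ℝ))) := by
      simp only [Set.mem_insert_iff, Set.mem_singleton_iff]
      push_neg
      exact ⟨hne _ _ _ m4 n45, hne _ _ _ m4 n46⟩
    have ha5 : (Y ∩ {v | v i1 - v iN = 0}) ∉
        ({Y ∩ {v | v i1 + v iN = 0}} : Set (Set (Fin n → ℝ))) := by
      simp only [Set.mem_singleton_iff]
      exact hne _ _ _ m5 n56
    simp only [R]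
    rw [Set.ncard_insert_of_notMem ha1 (Set.toFinite _),
        Set.ncard_insert_of_notMem ha2 (Set.toFinite _),
        Set.ncard_insert_of_notMem ha3 (Set.toFinite _),
        Set.ncard_insert_of_notMem ha4 (Set.toFinite _),
        Set.ncard_insert_of_notMem ha5 (Set.toFinite _),
        Set.ncard_singleton]
end

section
/- Let Y = ⋂_{2 ≤ i < j ≤ n−1} ker(x_i − x_j) ⊆ ℝⁿ for n ≥ 5, and let A_I be the arrangement of ideal type (ii): all hyperplanes ker(x_i − x_j) (1 ≤ i < j ≤ n), ker(x₁ + x_n), and ker(x_i + x_j) for 2 ≤ i < j ≤ n except those with i ≤ s < j ≤ t (for fixed 1 < s < t < n−1). Then the restriction A_I^Y again consists of exactly 6 hyperplanes of Y, defined by x₁ − x₂, x₂, x₁ ± x_n, x₂ ± x_n. -/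
/-- auxiliary vector: value `a` at coordinate 0, `c` at `n-1`, `b` elsewhere -/
def eV (n : ℕ) (a b c : ℝ) : Fin n → ℝ :=
  fun k => if (k : ℕ) = 0 then a else if (k : ℕ) = n - 1 then c else b

lemma eV_zero (n : ℕ) (a b c : ℝ) (k : Fin n) (h : (k : ℕ) = 0) :
    eV n a b c k = a := by unfold eV; rw [if_pos h]

lemma eV_last (n : ℕ) (a b c : ℝ) (k : Fin n) (h : (k : ℕ) = n - 1)
    (h0 : (k : ℕ) ≠ 0) : eV n a b c k = c := by unfold eV; rw [if_neg h0, if_pos h]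

lemma eV_mid (n : ℕ) (a b c : ℝ) (k : Fin n) (h0 : (k : ℕ) ≠ 0)
    (h1 : (k : ℕ) ≠ n - 1) : eV n a b c k = b := by unfold eV; rw [if_neg h0, if_neg h1]

lemma ne_of_mem_notMem {α : Type*} {x : α} {s u : Set α}
    (hx : x ∈ s) (hnx : x ∉ u) : s ≠ u := fun h => hnx (h ▸ hx)

/-- For `n ≥ 5` and fixed `1 < s < t < n−1` (1-based; here 0-based
`0 < s < t < n−2`), let `A_I` be the ideal-type arrangement (ii): all
`ker(x_i−x_j)`, `ker(x₁+x_n)`, and the `ker(x_i+x_j)` with `2 ≤ i < j ≤ n`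
except those with `i ≤ s < j ≤ t`.  Then the restriction to
`Y = ⋂_{2 ≤ i < j ≤ n−1} ker(x_i−x_j)` again consists of exactly the 6
hyperplanes of `Y` cut out by `x₁−x₂, x₂, x₁±x_n, x₂±x_n`. -/
theorem stmt_7 (n s t : ℕ) (hn : 5 ≤ n) (hs : 1 ≤ s) (hst : s < t) (ht : t < n - 2) :
    let i0 : Fin n := ⟨0, by omega⟩
    let i1 : Fin n := ⟨1, by omega⟩
    let iN : Fin n := ⟨n - 1, by omega⟩
    let A : Set (Set (Fin n → ℝ)) :=
      {H | ∃ i j : Fin n, i < j ∧ H = {v | v i - v j = 0}} ∪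
        {H | ∃ i j : Fin n, 1 ≤ (i : ℕ) ∧ i < j ∧
          ¬ ((i : ℕ) ≤ s ∧ s < (j : ℕ) ∧ (j : ℕ) ≤ t) ∧ H = {v | v i + v j = 0}} ∪
        {{v | v i0 + v iN = 0}}
    let Y : Set (Fin n → ℝ) :=
      {v | ∀ i j : Fin n, 1 ≤ (i : ℕ) → i < j → (j : ℕ) ≤ n - 2 → v i - v j = 0}
    let R : Set (Set (Fin n → ℝ)) :=
      { Y ∩ {v | v i0 - v i1 = 0}, Y ∩ {v | v i1 = 0},
        Y ∩ {v | v i0 - v iN = 0}, Y ∩ {v | v i0 + v iN = 0},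
        Y ∩ {v | v i1 - v iN = 0}, Y ∩ {v | v i1 + v iN = 0} }
    {T | ∃ H ∈ A, ¬ Y ⊆ H ∧ T = Y ∩ H} = R ∧ R.ncard = 6 := by
  intro i0 i1 iN A Y R
  -- every vector in Y has all middle coordinates equal to coordinate 1
  have hYval : ∀ v, v ∈ Y → ∀ k : Fin n, 1 ≤ (k : ℕ) → (k : ℕ) ≤ n - 2 →
      v k = v i1 := by
    intro v hv k hk1 hk2
    rcases eq_or_lt_of_le hk1 with h | h
    · have : k = i1 := Fin.ext (h.symm : (k : ℕ) = 1)
      rw [this]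
    · have h' := hv i1 k (le_refl 1) (show (1 : ℕ) < (k : ℕ) from h) hk2
      linarith
  -- the test vectors lie in Y
  have heY : ∀ a b c : ℝ, eV n a b c ∈ Y := by
    intro a b c i j hi hij hj
    have hij' : (i : ℕ) < (j : ℕ) := hij
    show eV n a b c i - eV n a b c j = 0
    rw [eV_mid n a b c i (by omega) (by omega), eV_mid n a b c j (by omega) (by omega),
      sub_self]
  have he0 : ∀ a b c : ℝ, eV n a b c i0 = a := fun a b c => eV_zero n a b c i0 rfl
  have he1 : ∀ a b c : ℝ, eV n a b c i1 = b :=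
    fun a b c => eV_mid n a b c i1 (show (1 : ℕ) ≠ 0 by omega) (show (1 : ℕ) ≠ n - 1 by omega)
  have heN : ∀ a b c : ℝ, eV n a b c iN = c :=
    fun a b c => eV_last n a b c iN rfl (show n - 1 ≠ 0 by omega)
  constructor
  · ext T
    constructor
    · rintro ⟨H, hH, hYH, rfl⟩
      rcases hH with (⟨i, j, hij, rfl⟩ | ⟨i, j, hi1, hij, hnot, rfl⟩) | rfl
      · -- difference hyperplane
        have hij' : (i : ℕ) < (j : ℕ) := hij
        have hjn : (j : ℕ) ≤ n - 1 := by omega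
        by_cases hi0' : (i : ℕ) = 0
        · have hii : i = i0 := Fin.ext hi0'
          subst hii
          by_cases hj' : (j : ℕ) = n - 1
          · have hjj : j = iN := Fin.ext hj'
            subst hjj
            exact Or.inr (Or.inr (Or.inl rfl))
          · -- j is a middle coordinate: equal to the first hyperplane
            have hEq : Y ∩ {v | v i0 - v j = 0} = Y ∩ {v | v i0 - v i1 = 0} := by
              ext v
              simp only [Set.mem_inter_iff, Set.mem_setOf_eq]
              constructor
              · rintro ⟨hv, h⟩
                have hvj := hYval v hv j (by omega) (by omega)
                exact ⟨hv, by linarith⟩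
              · rintro ⟨hv, h⟩
                have hvj := hYval v hv j (by omega) (by omega)
                exact ⟨hv, by linarith⟩
            exact Or.inl hEq
        · -- i is a middle coordinate
          by_cases hj' : (j : ℕ) = n - 1
          · have hjj : j = iN := Fin.ext hj'
            subst hjj
            have hEq : Y ∩ {v | v i - v iN = 0} = Y ∩ {v | v i1 - v iN = 0} := by
              ext v
              simp only [Set.mem_inter_iff, Set.mem_setOf_eq]
              constructor
              · rintro ⟨hv, h⟩
                have hvi := hYval v hv i (by omega) (by omega)
                exact ⟨hv, by linarith⟩
              · rintro ⟨hv, h⟩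
                have hvi := hYval v hv i (by omega) (by omega)
                exact ⟨hv, by linarith⟩
            exact Or.inr (Or.inr (Or.inr (Or.inr (Or.inl hEq))))
          · -- both middle: Y ⊆ H, contradiction
            exact absurd (fun v hv => hv i j (by omega) hij (by omega)) hYH
      · -- sum hyperplane
        have hij' : (i : ℕ) < (j : ℕ) := hij
        have hjn : (j : ℕ) ≤ n - 1 := by omega
        by_cases hj' : (j : ℕ) = n - 1
        · have hjj : j = iN := Fin.ext hj'
          subst hjj
          have hEq : Y ∩ {v | v i + v iN = 0} = Y ∩ {v | v i1 + v iN = 0} := by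
            ext v
            simp only [Set.mem_inter_iff, Set.mem_setOf_eq]
            constructor
            · rintro ⟨hv, h⟩
              have hvi := hYval v hv i (by omega) (by omega)
              exact ⟨hv, by linarith⟩
            · rintro ⟨hv, h⟩
              have hvi := hYval v hv i (by omega) (by omega)
              exact ⟨hv, by linarith⟩
          exact Or.inr (Or.inr (Or.inr (Or.inr (Or.inr hEq))))
        · -- both middle: restriction is {x₂ = 0}
          have hEq : Y ∩ {v | v i + v j = 0} = Y ∩ {v | v i1 = 0} := by
            ext v
            simp only [Set.mem_inter_iff, Set.mem_setOf_eq]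
            constructor
            · rintro ⟨hv, h⟩
              have hvi := hYval v hv i (by omega) (by omega)
              have hvj := hYval v hv j (by omega) (by omega)
              exact ⟨hv, by linarith⟩
            · rintro ⟨hv, h⟩
              have hvi := hYval v hv i (by omega) (by omega)
              have hvj := hYval v hv j (by omega) (by omega)
              exact ⟨hv, by linarith⟩
          exact Or.inr (Or.inl hEq)
      · exact Or.inr (Or.inr (Or.inr (Or.inl rfl)))
    · intro hT
      rcases hT with rfl | rfl | rfl | rfl | rfl | rfl
      · refine ⟨{v | v i0 - v i1 = 0}, Or.inl (Or.inl ⟨i0, i1, ?_, rfl⟩), ?_, rfl⟩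
        · show (0 : ℕ) < 1; omega
        · intro hsub
          have h := hsub (heY 1 0 0)
          have h' : eV n 1 0 0 i0 - eV n 1 0 0 i1 = 0 := h
          rw [he0, he1] at h'
          norm_num at h'
      · refine ⟨{v | v (⟨t, by omega⟩ : Fin n) + v (⟨t + 1, by omega⟩ : Fin n) = 0},
          Or.inl (Or.inr ⟨⟨t, by omega⟩, ⟨t + 1, by omega⟩, show 1 ≤ t by omega,
            show t < t + 1 by omega, by intro h; exact absurd h.1 (by show ¬ (t ≤ s); omega),
            rfl⟩), ?_, ?_⟩
        · intro hsub
          have h := hsub (heY 0 1 0)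
          have h' : eV n 0 1 0 ⟨t, by omega⟩ + eV n 0 1 0 ⟨t + 1, by omega⟩ = 0 := h
          rw [eV_mid n 0 1 0 ⟨t, by omega⟩ (show t ≠ 0 by omega) (show t ≠ n - 1 by omega),
            eV_mid n 0 1 0 ⟨t + 1, by omega⟩ (show t + 1 ≠ 0 by omega)
              (show t + 1 ≠ n - 1 by omega)] at h'
          norm_num at h'
        · ext v
          simp only [Set.mem_inter_iff, Set.mem_setOf_eq]
          constructor
          · rintro ⟨hv, h⟩
            have hvi := hYval v hv ⟨t, by omega⟩ (show 1 ≤ t by omega)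
              (show t ≤ n - 2 by omega)
            have hvj := hYval v hv ⟨t + 1, by omega⟩ (show 1 ≤ t + 1 by omega)
              (show t + 1 ≤ n - 2 by omega)
            exact ⟨hv, by linarith⟩
          · rintro ⟨hv, h⟩
            have hvi := hYval v hv ⟨t, by omega⟩ (show 1 ≤ t by omega)
              (show t ≤ n - 2 by omega)
            have hvj := hYval v hv ⟨t + 1, by omega⟩ (show 1 ≤ t + 1 by omega)
              (show t + 1 ≤ n - 2 by omega)
            exact ⟨hv, by linarith⟩
      · refine ⟨{v | v i0 - v iN = 0}, Or.inl (Or.inl ⟨i0, iN, ?_, rfl⟩), ?_, rfl⟩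
        · show (0 : ℕ) < n - 1; omega
        · intro hsub
          have h := hsub (heY 1 0 0)
          have h' : eV n 1 0 0 i0 - eV n 1 0 0 iN = 0 := h
          rw [he0, heN] at h'
          norm_num at h'
      · refine ⟨{v | v i0 + v iN = 0}, Or.inr rfl, ?_, rfl⟩
        · intro hsub
          have h := hsub (heY 1 0 0)
          have h' : eV n 1 0 0 i0 + eV n 1 0 0 iN = 0 := h
          rw [he0, heN] at h'
          norm_num at h'
      · refine ⟨{v | v i1 - v iN = 0}, Or.inl (Or.inl ⟨i1, iN, ?_, rfl⟩), ?_, rfl⟩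
        · show (1 : ℕ) < n - 1; omega
        · intro hsub
          have h := hsub (heY 0 1 0)
          have h' : eV n 0 1 0 i1 - eV n 0 1 0 iN = 0 := h
          rw [he1, heN] at h'
          norm_num at h'
      · refine ⟨{v | v i1 + v iN = 0},
          Or.inl (Or.inr ⟨i1, iN, le_refl 1, by show (1 : ℕ) < n - 1; omega,
            by intro h; exact absurd h.2.2 (by show ¬ (n - 1 ≤ t); omega), rfl⟩), ?_, rfl⟩
        · intro hsub
          have h := hsub (heY 0 1 0)
          have h' : eV n 0 1 0 i1 + eV n 0 1 0 iN = 0 := h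
          rw [he1, heN] at h'
          norm_num at h'
  · -- cardinality
    -- witnesses for distinctness
    have mem1 : eV n 1 1 2 ∈ Y ∩ {v | v i0 - v i1 = 0} :=
      ⟨heY 1 1 2, show eV n 1 1 2 i0 - eV n 1 1 2 i1 = 0 by rw [he0, he1]; norm_num⟩
    have nm12 : eV n 1 1 2 ∉ Y ∩ {v | v i1 = 0} := by
      rintro ⟨-, h⟩
      have h' : eV n 1 1 2 i1 = 0 := h
      rw [he1] at h'; norm_num at h'
    have nm13 : eV n 1 1 2 ∉ Y ∩ {v | v i0 - v iN = 0} := by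
      rintro ⟨-, h⟩
      have h' : eV n 1 1 2 i0 - eV n 1 1 2 iN = 0 := h
      rw [he0, heN] at h'; norm_num at h'
    have nm14 : eV n 1 1 2 ∉ Y ∩ {v | v i0 + v iN = 0} := by
      rintro ⟨-, h⟩
      have h' : eV n 1 1 2 i0 + eV n 1 1 2 iN = 0 := h
      rw [he0, heN] at h'; norm_num at h'
    have nm15 : eV n 1 1 2 ∉ Y ∩ {v | v i1 - v iN = 0} := by
      rintro ⟨-, h⟩
      have h' : eV n 1 1 2 i1 - eV n 1 1 2 iN = 0 := h
      rw [he1, heN] at h'; norm_num at h'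
    have nm16 : eV n 1 1 2 ∉ Y ∩ {v | v i1 + v iN = 0} := by
      rintro ⟨-, h⟩
      have h' : eV n 1 1 2 i1 + eV n 1 1 2 iN = 0 := h
      rw [he1, heN] at h'; norm_num at h'
    have mem2 : eV n 1 0 2 ∈ Y ∩ {v | v i1 = 0} :=
      ⟨heY 1 0 2, show eV n 1 0 2 i1 = 0 from he1 1 0 2⟩
    have nm23 : eV n 1 0 2 ∉ Y ∩ {v | v i0 - v iN = 0} := by
      rintro ⟨-, h⟩
      have h' : eV n 1 0 2 i0 - eV n 1 0 2 iN = 0 := h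
      rw [he0, heN] at h'; norm_num at h'
    have nm24 : eV n 1 0 2 ∉ Y ∩ {v | v i0 + v iN = 0} := by
      rintro ⟨-, h⟩
      have h' : eV n 1 0 2 i0 + eV n 1 0 2 iN = 0 := h
      rw [he0, heN] at h'; norm_num at h'
    have nm25 : eV n 1 0 2 ∉ Y ∩ {v | v i1 - v iN = 0} := by
      rintro ⟨-, h⟩
      have h' : eV n 1 0 2 i1 - eV n 1 0 2 iN = 0 := h
      rw [he1, heN] at h'; norm_num at h'
    have nm26 : eV n 1 0 2 ∉ Y ∩ {v | v i1 + v iN = 0} := by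
      rintro ⟨-, h⟩
      have h' : eV n 1 0 2 i1 + eV n 1 0 2 iN = 0 := h
      rw [he1, heN] at h'; norm_num at h'
    have mem3 : eV n 1 2 1 ∈ Y ∩ {v | v i0 - v iN = 0} :=
      ⟨heY 1 2 1, show eV n 1 2 1 i0 - eV n 1 2 1 iN = 0 by rw [he0, heN]; norm_num⟩
    have nm34 : eV n 1 2 1 ∉ Y ∩ {v | v i0 + v iN = 0} := by
      rintro ⟨-, h⟩
      have h' : eV n 1 2 1 i0 + eV n 1 2 1 iN = 0 := h
      rw [he0, heN] at h'; norm_num at h'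
    have nm35 : eV n 1 2 1 ∉ Y ∩ {v | v i1 - v iN = 0} := by
      rintro ⟨-, h⟩
      have h' : eV n 1 2 1 i1 - eV n 1 2 1 iN = 0 := h
      rw [he1, heN] at h'; norm_num at h'
    have nm36 : eV n 1 2 1 ∉ Y ∩ {v | v i1 + v iN = 0} := by
      rintro ⟨-, h⟩
      have h' : eV n 1 2 1 i1 + eV n 1 2 1 iN = 0 := h
      rw [he1, heN] at h'; norm_num at h'
    have mem4 : eV n 1 2 (-1) ∈ Y ∩ {v | v i0 + v iN = 0} :=
      ⟨heY 1 2 (-1), show eV n 1 2 (-1) i0 + eV n 1 2 (-1) iN = 0 by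
        rw [he0, heN]; norm_num⟩
    have nm45 : eV n 1 2 (-1) ∉ Y ∩ {v | v i1 - v iN = 0} := by
      rintro ⟨-, h⟩
      have h' : eV n 1 2 (-1) i1 - eV n 1 2 (-1) iN = 0 := h
      rw [he1, heN] at h'; norm_num at h'
    have nm46 : eV n 1 2 (-1) ∉ Y ∩ {v | v i1 + v iN = 0} := by
      rintro ⟨-, h⟩
      have h' : eV n 1 2 (-1) i1 + eV n 1 2 (-1) iN = 0 := h
      rw [he1, heN] at h'; norm_num at h'
    have mem5 : eV n 0 1 1 ∈ Y ∩ {v | v i1 - v iN = 0} :=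
      ⟨heY 0 1 1, show eV n 0 1 1 i1 - eV n 0 1 1 iN = 0 by rw [he1, heN]; norm_num⟩
    have nm56 : eV n 0 1 1 ∉ Y ∩ {v | v i1 + v iN = 0} := by
      rintro ⟨-, h⟩
      have h' : eV n 0 1 1 i1 + eV n 0 1 1 iN = 0 := h
      rw [he1, heN] at h'; norm_num at h'
    have d12 := ne_of_mem_notMem mem1 nm12
    have d13 := ne_of_mem_notMem mem1 nm13
    have d14 := ne_of_mem_notMem mem1 nm14
    have d15 := ne_of_mem_notMem mem1 nm15
    have d16 := ne_of_mem_notMem mem1 nm16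
    have d23 := ne_of_mem_notMem mem2 nm23
    have d24 := ne_of_mem_notMem mem2 nm24
    have d25 := ne_of_mem_notMem mem2 nm25
    have d26 := ne_of_mem_notMem mem2 nm26
    have d34 := ne_of_mem_notMem mem3 nm34
    have d35 := ne_of_mem_notMem mem3 nm35
    have d36 := ne_of_mem_notMem mem3 nm36
    have d45 := ne_of_mem_notMem mem4 nm45
    have d46 := ne_of_mem_notMem mem4 nm46
    have d56 := ne_of_mem_notMem mem5 nm56
    show (({ Y ∩ {v | v i0 - v i1 = 0}, Y ∩ {v | v i1 = 0},
        Y ∩ {v | v i0 - v iN = 0}, Y ∩ {v | v i0 + v iN = 0},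
        Y ∩ {v | v i1 - v iN = 0}, Y ∩ {v | v i1 + v iN = 0} } :
        Set (Set (Fin n → ℝ)))).ncard = 6
    rw [Set.ncard_insert_of_notMem (by
        simp only [Set.mem_insert_iff, Set.mem_singleton_iff]
        push_neg
        exact ⟨d12, d13, d14, d15, d16⟩),
      Set.ncard_insert_of_notMem (by
        simp only [Set.mem_insert_iff, Set.mem_singleton_iff]
        push_neg
        exact ⟨d23, d24, d25, d26⟩),
      Set.ncard_insert_of_notMem (by
        simp only [Set.mem_insert_iff, Set.mem_singleton_iff]
        push_neg
        exact ⟨d34, d35, d36⟩),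
      Set.ncard_insert_of_notMem (by
        simp only [Set.mem_insert_iff, Set.mem_singleton_iff]
        push_neg
        exact ⟨d45, d46⟩),
      Set.ncard_insert_of_notMem (by
        simp only [Set.mem_singleton_iff]
        exact d56),
      Set.ncard_singleton]
end

section
/- The real 3-arrangement A with defining polynomial y·(x−y)·(x²−z²)·(y²−z²) is not simplicial: at least one chamber of the complement ℝ³ \ ⋃A is not an open simplicial cone (i.e., is not the set of positive linear combinations of 3 linearly independent vectors). -/
/-!
The chamber of `(-2, 1, 0)` is cut out by the six sign conditions of the defining forms, so it
is convex and hence equal to the connected component. The four points `(-1, 2, 1)`,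
`(-1, 2, -1)`, `(-2, 1, -1)`, `(-2, 1, 1)` lie outside this chamber while all their pairwise
sums lie inside. An open simplicial cone admits no such configuration: each point outside it
has a nonpositive coordinate in the generating basis, by pigeonhole two of the four points share
that coordinate, and then so does their sum.
-/

open Set Module

section OpenSimplicialCone

variable {𝕜 V ι : Type*} [Field 𝕜] [LinearOrder 𝕜]
  [AddCommGroup V] [Module 𝕜 V]

def openSimplicialCone (b : Basis ι 𝕜 V) : Set V := {p | ∀ i, 0 < b.repr p i}

theorem exists_add_notMem_openSimplicialCone [IsStrictOrderedRing 𝕜] [Fintype ι] {κ : Type*}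
    [Fintype κ] (b : Basis ι 𝕜 V) (q : κ → V) (hcard : Fintype.card ι < Fintype.card κ)
    (hq : ∀ k, q k ∉ openSimplicialCone b) :
    ∃ k l, k ≠ l ∧ q k + q l ∉ openSimplicialCone b := by
  have hneg : ∀ k, ∃ i, b.repr (q k) i ≤ 0 := by
    simpa [openSimplicialCone] using hq
  choose i hi using hneg
  obtain ⟨k, l, hkl, hikl⟩ := Fintype.exists_ne_map_eq_of_card_lt i hcard
  refine ⟨k, l, hkl, fun h => (h (i k)).not_ge ?_⟩
  simpa using add_nonpos (hi k) (hikl ▸ hi l)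

theorem setOf_exists_pos_eq_openSimplicialCone {u v w : V}
    (h : LinearIndependent 𝕜 ![u, v, w]) (hV : Fintype.card (Fin 3) = finrank 𝕜 V) :
    {p | ∃ a b c : 𝕜, 0 < a ∧ 0 < b ∧ 0 < c ∧ p = a • u + b • v + c • w} =
      openSimplicialCone (basisOfLinearIndependentOfCardEqFinrank h hV) := by
  set B := basisOfLinearIndependentOfCardEqFinrank h hV
  have hB : ⇑B = ![u, v, w] := coe_basisOfLinearIndependentOfCardEqFinrank h hV
  ext p
  constructor
  · rintro ⟨a, b, c, ha, hb, hc, rfl⟩ i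
    have : a • u + b • v + c • w = ∑ j, ![a, b, c] j • B j := by
      simp [hB, Fin.sum_univ_three]
    rw [this, B.repr_sum_self]
    fin_cases i <;> simpa
  · intro hp
    refine ⟨B.repr p 0, B.repr p 1, B.repr p 2, hp 0, hp 1, hp 2, ?_⟩
    conv_lhs => rw [← B.sum_repr p]
    simp [hB, Fin.sum_univ_three]

end OpenSimplicialCone

section Chambers

variable {V ι : Type*} [AddCommGroup V] [Module ℝ V] [TopologicalSpace V]
  [IsTopologicalAddGroup V] [ContinuousSMul ℝ V]

def chamber (g : ι → V →L[ℝ] ℝ) (x : V) : Set V := {p | ∀ i, 0 < g i x * g i p}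

theorem connectedComponentIn_eq_chamber {g : ι → V →L[ℝ] ℝ} {x : V}
    (hx : ∀ i, g i x ≠ 0) :
    connectedComponentIn {p | ∀ i, g i p ≠ 0} x = chamber g x := by
  apply Subset.antisymm
  · intro p hp i
    have hC := isPreconnected_connectedComponentIn (F := {p | ∀ i, g i p ≠ 0}) (x := x)
    have hCM := connectedComponentIn_subset {p | ∀ i, g i p ≠ 0} x
    have hxC := mem_connectedComponentIn (F := {p | ∀ i, g i p ≠ 0}) hx
    by_contra hneg
    obtain ⟨z, hz, hz0⟩ : 0 ∈ g i '' connectedComponentIn _ x := by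
      have hpi := hCM hp i
      rcases (hx i).lt_or_gt with h | h
      · exact hC.intermediate_value hxC hp (g i).continuous.continuousOn ⟨h.le, by nlinarith⟩
      · exact hC.intermediate_value hp hxC (g i).continuous.continuousOn ⟨by nlinarith, h.le⟩
    exact hCM hz i hz0
  · have hconv : Convex ℝ (chamber g x) := by
      simp only [chamber, ofPred_forall]
      exact convex_iInter fun i =>
        convex_halfSpace_gt ((g i x • g i).toLinearMap.isLinear) 0
    refine hconv.isPreconnected.subset_connectedComponentIn ?_ ?_
    · exact fun i => mul_self_pos.mpr (hx i)
    · intro p hp i hpi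
      simpa [hpi] using hp i

end Chambers

noncomputable def arrangementForm : Fin 6 → (Fin 3 → ℝ) →L[ℝ] ℝ :=
  let e := ContinuousLinearMap.proj (R := ℝ) (φ := fun _ : Fin 3 => ℝ)
  ![e 1, e 0 - e 1, e 0 + e 2, e 0 - e 2, e 1 + e 2, e 1 - e 2]

def basePoint : Fin 3 → ℝ := ![-2, 1, 0]

def testPoint : Fin 4 → Fin 3 → ℝ := ![![-1, 2, 1], ![-1, 2, -1], ![-2, 1, -1], ![-2, 1, 1]]

theorem compl_sUnion_eq_setOf_arrangementForm_ne_zero :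
    (⋃₀ ({{v | v 1 = 0}, {v | v 0 - v 1 = 0}, {v | v 0 + v 2 = 0}, {v | v 0 - v 2 = 0},
        {v | v 1 + v 2 = 0}, {v | v 1 - v 2 = 0}} : Set (Set (Fin 3 → ℝ))))ᶜ =
      {p | ∀ i, arrangementForm i p ≠ 0} := by
  ext p
  simp [arrangementForm, Fin.forall_fin_succ]

theorem arrangementForm_basePoint_ne_zero (i : Fin 6) : arrangementForm i basePoint ≠ 0 := by
  fin_cases i <;> norm_num [arrangementForm, basePoint, Matrix.cons_val_two, Matrix.tail_cons]

theorem testPoint_notMem (k : Fin 4) :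
    testPoint k ∉ chamber arrangementForm basePoint := by
  fin_cases k <;> simp [chamber, arrangementForm, basePoint, testPoint, Fin.exists_fin_succ]

theorem testPoint_add_mem {k l : Fin 4} (hkl : k ≠ l) :
    testPoint k + testPoint l ∈ chamber arrangementForm basePoint := by
  fin_cases k <;> fin_cases l <;>
    simp_all [chamber, arrangementForm, basePoint, testPoint, Fin.forall_fin_succ] <;> norm_num

/-- The real 3-arrangement `A` with defining polynomial `y·(x−y)·(x²−z²)·(y²−z²)`
is not simplicial: some chamber of `ℝ³ \ ⋃A` is not an open simplicial cone,
i.e. not the set of positive linear combinations of 3 linearly independent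
vectors. -/
theorem stmt_11 :
    let A : Set (Set (Fin 3 → ℝ)) :=
      { {v | v 1 = 0}, {v | v 0 - v 1 = 0},
        {v | v 0 + v 2 = 0}, {v | v 0 - v 2 = 0},
        {v | v 1 + v 2 = 0}, {v | v 1 - v 2 = 0} }
    let M : Set (Fin 3 → ℝ) := (⋃₀ A)ᶜ
    ∃ x ∈ M, ∀ u v w : Fin 3 → ℝ, LinearIndependent ℝ ![u, v, w] →
      connectedComponentIn M x ≠
        {p | ∃ a b c : ℝ, 0 < a ∧ 0 < b ∧ 0 < c ∧ p = a • u + b • v + c • w} := by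
  intro A M
  have hM : M = {p | ∀ i, arrangementForm i p ≠ 0} :=
    compl_sUnion_eq_setOf_arrangementForm_ne_zero
  refine ⟨basePoint, hM ▸ arrangementForm_basePoint_ne_zero, fun u v w h hcone => ?_⟩
  rw [hM, connectedComponentIn_eq_chamber arrangementForm_basePoint_ne_zero,
    setOf_exists_pos_eq_openSimplicialCone h (by simp)] at hcone
  obtain ⟨k, l, hkl, hsum⟩ := exists_add_notMem_openSimplicialCone _ testPoint (by simp)
    fun k => hcone ▸ testPoint_notMem k
  exact hsum (hcone ▸ testPoint_add_mem hkl)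
end

section
/- Let Φ be the root system Dₙ, n ≥ 5, with positive roots e_i ± e_j (i < j), and let I be an upper order ideal admitting the generator e_r + e_{n−1} for some 1 < r ≤ n−3. Set m = n − r + 1 and let Φ₀ = {±e_i ± e_j : r ≤ i < j ≤ n} be the standard subsystem of type D_m, and X = ⋂_{γ ∈ Φ₀⁺} H_γ. Then X ∈ L(A_I) and the localization (A_I)_X = {H ∈ A_I : X ⊆ H} equals {H_γ : γ ∈ Φ₀⁺ ∩ Iᶜ}, where Iᶜ = Φ⁺ \ I. -/
/-- Let `Φ⁺` be the positive roots of `Dₙ` (`n ≥ 5`) and `I` an upper order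
ideal admitting the root `e_r + e_{n−1}` (1-based; 0-based `e r + e (n−2)` with
`1 ≤ r ≤ n−4`) as a generator.  Let `Φ₀⁺ = {e_i ± e_j : r ≤ i < j ≤ n}` be the
positive roots of the standard subsystem of type `D_{n−r+1}` and
`X = ⋂_{γ ∈ Φ₀⁺} H_γ`.  Then `X ∈ L(A_I)` and the localization
`(A_I)_X = {H ∈ A_I : X ⊆ H}` equals `{H_γ : γ ∈ Φ₀⁺ ∩ Iᶜ}`. -/
theorem stmt_14 (n r : ℕ) (hn : 5 ≤ n) (hr : 1 ≤ r) (hr' : r ≤ n - 4)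
    (I : Set (Fin n → ℝ)) :
    let e : Fin n → (Fin n → ℝ) := fun i => Pi.single i 1
    let Φ : Set (Fin n → ℝ) :=
      {v | ∃ i j : Fin n, i < j ∧ (v = e i - e j ∨ v = e i + e j)}
    let rootLE : (Fin n → ℝ) → (Fin n → ℝ) → Prop :=
      fun α β => β - α ∈ AddSubmonoid.closure Φ
    let γ : Fin n → ℝ := e ⟨r, by omega⟩ + e ⟨n - 2, by omega⟩
    ∀ (_ : I ⊆ Φ) (_ : ∀ α ∈ I, ∀ β ∈ Φ, rootLE α β → β ∈ I)
      (_ : γ ∈ I) (_ : ∀ β ∈ I, rootLE β γ → β = γ),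
    let H : (Fin n → ℝ) → Set (Fin n → ℝ) := fun α => {v | ∑ i, α i * v i = 0}
    let AI : Set (Set (Fin n → ℝ)) := {T | ∃ α ∈ Φ \ I, T = H α}
    let Φ₀ : Set (Fin n → ℝ) :=
      {v | ∃ i j : Fin n, r ≤ (i : ℕ) ∧ i < j ∧ (v = e i - e j ∨ v = e i + e j)}
    let X : Set (Fin n → ℝ) := {v | ∀ α ∈ Φ₀, ∑ i, α i * v i = 0}
    (∃ S ⊆ AI, X = ⋂₀ S) ∧
      {T ∈ AI | X ⊆ T} = {T | ∃ α ∈ Φ₀ ∩ (Φ \ I), T = H α} := by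
  intro e Φ rootLE γ hIΦ hup hγI hmin H AI Φ₀ X
  -- fixed index elements
  obtain ⟨R, hR⟩ : ∃ k : Fin n, (k : ℕ) = r := ⟨⟨r, by omega⟩, rfl⟩
  obtain ⟨R1, hR1⟩ : ∃ k : Fin n, (k : ℕ) = r + 1 := ⟨⟨r + 1, by omega⟩, rfl⟩
  obtain ⟨N2, hN2⟩ : ∃ k : Fin n, (k : ℕ) = n - 2 := ⟨⟨n - 2, by omega⟩, rfl⟩
  obtain ⟨N1, hN1⟩ : ∃ k : Fin n, (k : ℕ) = n - 1 := ⟨⟨n - 1, by omega⟩, rfl⟩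
  have hγdef : γ = e R + e N2 := by
    have h1 : (⟨r, by omega⟩ : Fin n) = R := Fin.ext (by simp only [Fin.val_mk]; omega)
    have h2 : (⟨n - 2, by omega⟩ : Fin n) = N2 := Fin.ext (by simp only [Fin.val_mk]; omega)
    show e ⟨r, by omega⟩ + e ⟨n - 2, by omega⟩ = e R + e N2
    rw [h1, h2]
  -- basic sum computations
  have hs : ∀ (a : Fin n) (v : Fin n → ℝ), ∑ i, e a i * v i = v a := by
    intro a v
    simp [e, Pi.single_apply, ite_mul]
  have hplus : ∀ (a b : Fin n) (v : Fin n → ℝ),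
      ∑ i, (e a + e b) i * v i = v a + v b := by
    intro a b v
    simp only [Pi.add_apply, add_mul, Finset.sum_add_distrib, hs]
  have hminus : ∀ (a b : Fin n) (v : Fin n → ℝ),
      ∑ i, (e a - e b) i * v i = v a - v b := by
    intro a b v
    simp only [Pi.sub_apply, sub_mul, Finset.sum_sub_distrib, hs]
  have e0 : ∀ (a k : Fin n), (k : ℕ) ≠ (a : ℕ) → e a k = 0 :=
    fun a k h => Pi.single_eq_of_ne (fun hh => h (congrArg Fin.val hh)) 1
  have e1 : ∀ a : Fin n, e a a = 1 := fun a => Pi.single_eq_same a 1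
  -- membership facts
  have hΦm : ∀ (i j : Fin n), (i : ℕ) < (j : ℕ) → e i - e j ∈ Φ :=
    fun i j h => ⟨i, j, Fin.lt_def.mpr h, Or.inl rfl⟩
  have hΦp : ∀ (i j : Fin n), (i : ℕ) < (j : ℕ) → e i + e j ∈ Φ :=
    fun i j h => ⟨i, j, Fin.lt_def.mpr h, Or.inr rfl⟩
  have hclm : ∀ (i j : Fin n), (i : ℕ) ≤ (j : ℕ) →
      e i - e j ∈ AddSubmonoid.closure Φ := by
    intro i j h
    rcases eq_or_lt_of_le h with h' | h'
    · rw [Fin.ext h', sub_self]; exact zero_mem _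
    · exact AddSubmonoid.subset_closure (hΦm i j h')
  have habel1 : ∀ a b c d : Fin n → ℝ, (a + b) - (c - d) = (a - c) + (b + d) := by
    intro a b c d; abel
  have habel2 : ∀ a b c : Fin n → ℝ, (a + b) - (c + b) = a - c := by
    intro a b c; abel
  have hnotI : ∀ α, α ≠ γ → rootLE α γ → α ∉ I :=
    fun α hne hle hI => hne (hmin α hI hle)
  have hXmem : ∀ v : Fin n → ℝ, (∀ i : Fin n, r ≤ (i : ℕ) → v i = 0) → v ∈ X := by
    intro v hv α hα
    obtain ⟨i, j, hi, hij, h | h⟩ := hα <;> subst h <;>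
      have hj : r ≤ (j : ℕ) := le_trans hi (Fin.lt_def.mp hij).le
    · rw [hminus, hv i hi, hv j hj, sub_zero]
    · rw [hplus, hv i hi, hv j hj, add_zero]
  -- the chosen roots are in Φ \ I
  have hAm : ∀ i : Fin n, r ≤ (i : ℕ) → (i : ℕ) < n - 1 → e i - e N1 ∈ Φ \ I := by
    intro i h1 h2
    refine ⟨hΦm i N1 (by omega), hnotI _ ?_ ?_⟩
    · intro h
      have h' := congrFun h N1
      rw [hγdef] at h'
      rw [Pi.sub_apply, Pi.add_apply, e0 i N1 (by omega), e1,
        e0 R N1 (by omega), e0 N2 N1 (by omega)] at h'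
      norm_num at h'
    · show γ - (e i - e N1) ∈ AddSubmonoid.closure Φ
      rw [hγdef, habel1]
      exact add_mem (hclm R i (by omega))
        (AddSubmonoid.subset_closure (hΦp N2 N1 (by omega)))
  have hAp : e R1 + e N2 ∈ Φ \ I := by
    refine ⟨hΦp R1 N2 (by omega), hnotI _ ?_ ?_⟩
    · intro h
      have h' := congrFun h R
      rw [hγdef] at h'
      rw [Pi.add_apply, Pi.add_apply, e0 R1 R (by omega), e0 N2 R (by omega), e1] at h'
      norm_num at h'
    · show γ - (e R1 + e N2) ∈ AddSubmonoid.closure Φ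
      rw [hγdef, habel2]
      exact AddSubmonoid.subset_closure (hΦm R R1 (by omega))
  constructor
  · -- the intersection part
    refine ⟨{T | ∃ α, ((∃ i : Fin n, r ≤ (i : ℕ) ∧ (i : ℕ) < n - 1 ∧ α = e i - e N1)
        ∨ α = e R1 + e N2) ∧ T = H α}, ?_, ?_⟩
    · rintro T ⟨α, hα, rfl⟩
      rcases hα with ⟨i, h1, h2, rfl⟩ | rfl
      · exact ⟨_, hAm i h1 h2, rfl⟩
      · exact ⟨_, hAp, rfl⟩
    · ext v
      constructor
      · intro hv
        rw [Set.mem_sInter]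
        rintro T ⟨α, hα, rfl⟩
        refine hv α ?_
        rcases hα with ⟨i, h1, h2, rfl⟩ | rfl
        · exact ⟨i, N1, h1, Fin.lt_def.mpr (by omega), Or.inl rfl⟩
        · exact ⟨R1, N2, by omega, Fin.lt_def.mpr (by omega), Or.inr rfl⟩
      · intro hv
        have key : ∀ i : Fin n, r ≤ (i : ℕ) → (i : ℕ) < n - 1 → v i - v N1 = 0 := by
          intro i h1 h2
          have := Set.mem_sInter.mp hv (H (e i - e N1)) ⟨_, Or.inl ⟨i, h1, h2, rfl⟩, rfl⟩
          rwa [Set.mem_setOf_eq, hminus] at this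
        have key2 : v R1 + v N2 = 0 := by
          have := Set.mem_sInter.mp hv (H (e R1 + e N2)) ⟨_, Or.inr rfl, rfl⟩
          rwa [Set.mem_setOf_eq, hplus] at this
        have hv1 := key R1 (by omega) (by omega)
        have hv2 := key N2 (by omega) (by omega)
        have hzero : v N1 = 0 := by linarith
        refine hXmem v ?_
        intro i hi
        by_cases hc : (i : ℕ) = n - 1
        · rw [Fin.ext (show (i : ℕ) = (N1 : ℕ) by omega)]; exact hzero
        · have := key i hi (by omega); linarith
  · -- the localization part
    ext T
    simp only [Set.mem_sep_iff, Set.mem_setOf_eq]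
    constructor
    · rintro ⟨⟨α, hαΦI, rfl⟩, hXT⟩
      refine ⟨α, ⟨?_, hαΦI⟩, rfl⟩
      obtain ⟨i, j, hij, hc⟩ := hαΦI.1
      refine ⟨i, j, ?_, hij, hc⟩
      by_contra hlt
      push_neg at hlt
      have hij' := Fin.lt_def.mp hij
      have hvX : e i ∈ X := hXmem (e i) (fun k hk => e0 i k (by omega))
      have hmem := hXT hvX
      rw [Set.mem_setOf_eq] at hmem
      rcases hc with h | h <;> subst h
      · rw [hminus, e1, e0 i j (by omega), sub_zero] at hmem
        exact one_ne_zero hmem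
      · rw [hplus, e1, e0 i j (by omega), add_zero] at hmem
        exact one_ne_zero hmem
    · rintro ⟨α, ⟨hαΦ₀, hαΦI⟩, rfl⟩
      exact ⟨⟨α, hαΦI, rfl⟩, fun v hv => hv α hαΦ₀⟩
end
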